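/- arXiv:math/0103132 — 8 statements merged into one kernel-verified Lean document; each statement's English description precedes it below -/
import Mathlib

section
/- Let G be a group and let α₁, α₂, α₃, λ ∈ G satisfy the triangular relation α₁α₂ = α₂λ = λα₁ together with α₃λ = λα₃. Then for every natural number k, α₁ α₂ α₃ᵏ α₁ = α₂ α₃ᵏ α₁ α₂. -/
theorem stmt_1 {G : Type*} [Group G] (α₁ α₂ α₃ lam : G)
    (h1 : α₁ * α₂ = α₂ * lam) (h2 : α₂ * lam = lam * α₁)
    (h3 : α₃ * lam = lam * α₃) :
    ∀ k : ℕ, α₁ * α₂ * α₃ ^ k * α₁ = α₂ * α₃ ^ k * α₁ * α₂ := by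
  intro k
  have hc : lam * α₃ ^ k = α₃ ^ k * lam := (Commute.pow_left h3 k).symm
  calc α₁ * α₂ * α₃ ^ k * α₁ = α₂ * (lam * α₃ ^ k) * α₁ := by rw [h1]; group
    _ = α₂ * α₃ ^ k * (lam * α₁) := by rw [hc]; group
    _ = α₂ * α₃ ^ k * (α₁ * α₂) := by rw [← h2, h1]
    _ = α₂ * α₃ ^ k * α₁ * α₂ := by group
end

section
/- Let G be a group and let α₁, α₂, α₃, α₄, λ ∈ G satisfy α₂α₃ = α₃λ, α₁α₃ = α₃α₁, and α₁λ = α₄α₁. Then for every natural number k, α₁ α₂ᵏ α₃ = α₃ α₄ᵏ α₁. -/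
theorem stmt_2 {G : Type*} [Group G] (α₁ α₂ α₃ α₄ lam : G)
    (h1 : α₂ * α₃ = α₃ * lam) (h2 : α₁ * α₃ = α₃ * α₁)
    (h3 : α₁ * lam = α₄ * α₁) :
    ∀ k : ℕ, α₁ * α₂ ^ k * α₃ = α₃ * α₄ ^ k * α₁ := by
  have ha : ∀ k : ℕ, α₂ ^ k * α₃ = α₃ * lam ^ k := by
    intro k
    induction k with
    | zero => simp
    | succ n ih =>
      rw [pow_succ, pow_succ', mul_assoc, h1, ← mul_assoc, ih, mul_assoc, ← pow_succ, ← pow_succ']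
  have hb : ∀ k : ℕ, α₁ * lam ^ k = α₄ ^ k * α₁ := by
    intro k
    induction k with
    | zero => simp
    | succ n ih =>
      rw [pow_succ', pow_succ', ← mul_assoc, h3, mul_assoc, ih, ← mul_assoc]
  intro k
  rw [mul_assoc, ha, ← mul_assoc, h2, mul_assoc, hb, ← mul_assoc]
end

section
/- Let G be a group and let α₁, α₂, α₃, α₄, μ ∈ G satisfy the triangular relation α₄α₁ = α₁μ = μα₄ together with α₁α₃ = α₃α₁, μα₂ = α₂μ, α₁α₂α₁ = α₂α₁α₂, α₂α₃α₂ = α₃α₂α₃, and α₃μα₃ = μα₃μ. Then for every natural number k, α₁ α₂ α₃ α₄ α₁ α₂ᵏ α₃ α₄ = α₂ α₃ᵏ α₄ α₁ α₂ α₃ α₄ α₁. -/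
theorem stmt_3 {G : Type*} [Group G] (α₁ α₂ α₃ α₄ mu : G)
    (h1 : α₄ * α₁ = α₁ * mu) (h2 : α₁ * mu = mu * α₄)
    (h3 : α₁ * α₃ = α₃ * α₁) (h4 : mu * α₂ = α₂ * mu)
    (h5 : α₁ * α₂ * α₁ = α₂ * α₁ * α₂) (h6 : α₂ * α₃ * α₂ = α₃ * α₂ * α₃)
    (h7 : α₃ * mu * α₃ = mu * α₃ * mu) :
    ∀ k : ℕ, α₁ * α₂ * α₃ * α₄ * α₁ * α₂ ^ k * α₃ * α₄ =
      α₂ * α₃ ^ k * α₄ * α₁ * α₂ * α₃ * α₄ * α₁ := by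
  have p1 : ∀ x : G, α₄ * (α₁ * x) = α₁ * (mu * x) := by
    intro x; rw [← mul_assoc, h1, mul_assoc]
  have p2 : ∀ x : G, α₁ * (mu * x) = mu * (α₄ * x) := by
    intro x; rw [← mul_assoc, h2, mul_assoc]
  have p3 : ∀ x : G, α₃ * (α₁ * x) = α₁ * (α₃ * x) := by
    intro x; rw [← mul_assoc, ← h3, mul_assoc]
  have p4 : ∀ x : G, mu * (α₂ * x) = α₂ * (mu * x) := by
    intro x; rw [← mul_assoc, h4, mul_assoc]
  have p5 : ∀ x : G, α₁ * (α₂ * (α₁ * x)) = α₂ * (α₁ * (α₂ * x)) := by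
    intro x; rw [← mul_assoc, ← mul_assoc, h5, mul_assoc, mul_assoc]
  have p6 : ∀ x : G, α₂ * (α₃ * (α₂ * x)) = α₃ * (α₂ * (α₃ * x)) := by
    intro x; rw [← mul_assoc, ← mul_assoc, h6, mul_assoc, mul_assoc]
  have p7 : ∀ x : G, α₃ * (mu * (α₃ * x)) = mu * (α₃ * (mu * x)) := by
    intro x; rw [← mul_assoc, ← mul_assoc, h7, mul_assoc, mul_assoc]
  have pL0 : ∀ x : G, α₁ * (α₂ * (α₃ * (α₄ * (α₁ * (α₃ * (α₄ * x)))))) =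
      α₂ * (α₄ * (α₁ * (α₂ * (α₃ * (α₄ * (α₁ * x)))))) := by
    intro x
    rw [p1, p3, p7, ← p2, p3]
    rw [p1 (α₂ * _), p1 x, p4, p3, ← p5]
  have pL1 : ∀ x : G, α₃ * (α₁ * (α₂ * (α₃ * (α₄ * (α₁ * (α₂ * x)))))) =
      α₂ * (α₃ * (α₁ * (α₂ * (α₃ * (α₄ * (α₁ * x)))))) := by
    intro x
    rw [p3, ← p6, p1, p4, ← p5, p3]
    rw [p1 x, p3, ← p6, ← p5]
  intro k
  induction k with
  | zero =>
    simpa [mul_assoc] using pL0 1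
  | succ k ih =>
    simp only [mul_assoc] at ih ⊢
    rw [← mul_right_inj α₃, pow_succ']
    simp only [mul_assoc]
    rw [pL1, ih, p6, pow_succ' α₃]
    simp only [mul_assoc]
end

section
/- Let G be a group and let α₁, α₂, α₃, α₄, α₅, λ ∈ G satisfy the triangular relations α₂α₃ = α₃λ = λα₂ and λα₄ = α₄α₁ = α₁λ, together with α₅α₃ = α₄α₅, α₂α₄ = α₄α₂, and α₂α₅ = α₅α₁. Then for every natural number k, α₂ α₃ᵏ α₅ α₂ α₃ = α₄ α₁ᵏ α₅ α₄ α₁. -/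
theorem stmt_4 {G : Type*} [Group G] (α₁ α₂ α₃ α₄ α₅ lam : G)
    (h1 : α₂ * α₃ = α₃ * lam) (h2 : α₃ * lam = lam * α₂)
    (h3 : lam * α₄ = α₄ * α₁) (h4 : α₄ * α₁ = α₁ * lam)
    (h5 : α₅ * α₃ = α₄ * α₅) (h6 : α₂ * α₄ = α₄ * α₂)
    (h7 : α₂ * α₅ = α₅ * α₁) :
    ∀ k : ℕ, α₂ * α₃ ^ k * α₅ * α₂ * α₃ = α₄ * α₁ ^ k * α₅ * α₄ * α₁ := by
  intro k
  induction k with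
  | zero =>
    simp only [pow_zero, mul_one]
    calc α₂ * α₅ * α₂ * α₃ = α₂ * α₅ * (α₂ * α₃) := by group
      _ = α₂ * α₅ * (α₃ * lam) := by rw [h1]
      _ = α₂ * (α₅ * α₃) * lam := by group
      _ = α₂ * (α₄ * α₅) * lam := by rw [h5]
      _ = (α₂ * α₄) * (α₅ * lam) := by group
      _ = (α₄ * α₂) * (α₅ * lam) := by rw [h6]
      _ = α₄ * (α₂ * α₅) * lam := by group
      _ = α₄ * (α₅ * α₁) * lam := by rw [h7]
      _ = α₄ * α₅ * (α₁ * lam) := by group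
      _ = α₄ * α₅ * (α₄ * α₁) := by rw [← h4]
      _ = α₄ * α₅ * α₄ * α₁ := by group
  | succ k ih =>
    have h12 : α₂ * α₃ = lam * α₂ := h1.trans h2
    calc α₂ * α₃ ^ (k + 1) * α₅ * α₂ * α₃
        = (α₂ * α₃) * (α₃ ^ k * α₅ * α₂ * α₃) := by rw [pow_succ']; group
      _ = (lam * α₂) * (α₃ ^ k * α₅ * α₂ * α₃) := by rw [h12]
      _ = lam * (α₂ * α₃ ^ k * α₅ * α₂ * α₃) := by group
      _ = lam * (α₄ * α₁ ^ k * α₅ * α₄ * α₁) := by rw [ih]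
      _ = (lam * α₄) * (α₁ ^ k * α₅ * α₄ * α₁) := by group
      _ = (α₄ * α₁) * (α₁ ^ k * α₅ * α₄ * α₁) := by rw [h3]
      _ = α₄ * α₁ ^ (k + 1) * α₅ * α₄ * α₁ := by rw [pow_succ']; group
end

section
/- Let G be a group and let α₁, α₂, α₃, λ, μ, ν ∈ G satisfy α₁α₂ = λα₁, α₃λ = μα₃, α₂μ = μα₂, α₁μ = να₁, and α₃ν = α₂α₃. Then for every natural number k, α₃ α₁ α₂ᵏ α₃ α₁ α₂ = α₂ α₃ α₁ α₂ᵏ α₃ α₁. -/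
theorem stmt_5 {G : Type*} [Group G] (α₁ α₂ α₃ lam mu nu : G)
    (h1 : α₁ * α₂ = lam * α₁) (h2 : α₃ * lam = mu * α₃)
    (h3 : α₂ * mu = mu * α₂) (h4 : α₁ * mu = nu * α₁)
    (h5 : α₃ * nu = α₂ * α₃) :
    ∀ k : ℕ, α₃ * α₁ * α₂ ^ k * α₃ * α₁ * α₂ =
      α₂ * α₃ * α₁ * α₂ ^ k * α₃ * α₁ := by
  have p1 : ∀ k : ℕ, α₁ * α₂ ^ k = lam ^ k * α₁ := by
    intro k; induction k with
    | zero => simp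
    | succ n ih =>
      rw [pow_succ, ← mul_assoc, ih, mul_assoc, h1, pow_succ, mul_assoc]
  have p2 : ∀ k : ℕ, α₃ * lam ^ k = mu ^ k * α₃ := by
    intro k; induction k with
    | zero => simp
    | succ n ih =>
      rw [pow_succ, ← mul_assoc, ih, mul_assoc, h2, pow_succ, mul_assoc]
  have p3 : ∀ k : ℕ, α₂ * mu ^ k = mu ^ k * α₂ := by
    intro k; induction k with
    | zero => simp
    | succ n ih =>
      rw [pow_succ, ← mul_assoc, ih, mul_assoc, h3, ← mul_assoc]
  have p1' : ∀ (k : ℕ) (x : G), α₁ * (α₂ ^ k * x) = lam ^ k * (α₁ * x) := by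
    intro k x; rw [← mul_assoc, p1, mul_assoc]
  have p2' : ∀ (k : ℕ) (x : G), α₃ * (lam ^ k * x) = mu ^ k * (α₃ * x) := by
    intro k x; rw [← mul_assoc, p2, mul_assoc]
  have p3' : ∀ (k : ℕ) (x : G), α₂ * (mu ^ k * x) = mu ^ k * (α₂ * x) := by
    intro k x; rw [← mul_assoc, p3, mul_assoc]
  have base : α₃ * α₁ * α₃ * α₁ * α₂ = α₂ * α₃ * α₁ * α₃ * α₁ := by
    calc α₃ * α₁ * α₃ * α₁ * α₂ = α₃ * α₁ * α₃ * (α₁ * α₂) := by group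
    _ = α₃ * α₁ * (α₃ * lam) * α₁ := by rw [h1]; group
    _ = α₃ * (α₁ * mu) * α₃ * α₁ := by rw [h2]; group
    _ = (α₃ * nu) * α₁ * α₃ * α₁ := by rw [h4]; group
    _ = α₂ * α₃ * α₁ * α₃ * α₁ := by rw [h5]
  have base' : α₃ * (α₁ * (α₃ * (α₁ * α₂))) = α₂ * (α₃ * (α₁ * (α₃ * α₁))) := by
    simpa [mul_assoc] using base
  intro k
  simp only [mul_assoc]
  conv_rhs => rw [p1', p2', p3']
  conv_lhs => rw [p1', p2']
  rw [base']
end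

section
/- Let G be a group and let α₁, α₂, α₃, α₄, λ, ν ∈ G satisfy α₄α₃ = λα₄, α₂α₄ = α₄α₂, α₂α₃ = να₂, α₄ν = α₁α₄, α₂α₁α₂ = α₁α₂α₁, and λα₁ = α₁α₂. Then for every natural number k, α₄ α₃ α₂^{k+1} α₃ = α₁ α₂² α₁ᵏ α₄. -/
theorem stmt_6 {G : Type*} [Group G] (α₁ α₂ α₃ α₄ lam nu : G)
    (h1 : α₄ * α₃ = lam * α₄) (h2 : α₂ * α₄ = α₄ * α₂)
    (h3 : α₂ * α₃ = nu * α₂) (h4 : α₄ * nu = α₁ * α₄)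
    (h5 : α₂ * α₁ * α₂ = α₁ * α₂ * α₁) (h6 : lam * α₁ = α₁ * α₂) :
    ∀ k : ℕ, α₄ * α₃ * α₂ ^ (k + 1) * α₃ = α₁ * α₂ ^ 2 * α₁ ^ k * α₄ := by
  have hc : ∀ n : ℕ, α₄ * α₂ ^ n = α₂ ^ n * α₄ := fun n =>
    ((Commute.pow_left (h2 : Commute α₂ α₄) n)).symm
  have aux : ∀ k : ℕ, lam * α₂ ^ k * α₁ * α₂ = α₁ * α₂ ^ 2 * α₁ ^ k := by
    intro k
    induction k with
    | zero => simpa [pow_two, mul_assoc] using congrArg (· * α₂) h6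
    | succ n ih =>
        calc lam * α₂ ^ (n + 1) * α₁ * α₂
            = lam * α₂ ^ n * (α₂ * α₁ * α₂) := by
              rw [pow_succ]; group
          _ = lam * α₂ ^ n * (α₁ * α₂ * α₁) := by rw [h5]
          _ = lam * α₂ ^ n * α₁ * α₂ * α₁ := by group
          _ = α₁ * α₂ ^ 2 * α₁ ^ n * α₁ := by rw [ih]
          _ = α₁ * α₂ ^ 2 * α₁ ^ (n + 1) := by rw [pow_succ]; group
  intro k
  calc α₄ * α₃ * α₂ ^ (k + 1) * α₃
      = lam * (α₄ * α₂ ^ k) * (α₂ * α₃) := by rw [h1, pow_succ]; group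
    _ = lam * (α₂ ^ k * α₄) * (nu * α₂) := by rw [hc k, h3]
    _ = lam * α₂ ^ k * (α₄ * nu) * α₂ := by group
    _ = lam * α₂ ^ k * (α₁ * α₄) * α₂ := by rw [h4]
    _ = lam * α₂ ^ k * α₁ * (α₄ * α₂) := by group
    _ = lam * α₂ ^ k * α₁ * (α₂ * α₄) := by rw [← h2]
    _ = (lam * α₂ ^ k * α₁ * α₂) * α₄ := by group
    _ = α₁ * α₂ ^ 2 * α₁ ^ k * α₄ := by rw [aux k]
end

section
/- Let G be a group, m ≥ 3 a natural number, and α₁, α₂, …, α_m, λ, μ, ν ∈ G satisfying: α₂·(α₃α₄⋯α_m) = (α₃α₄⋯α_m)·λ; λα₁ = α₁μ; μαᵢ = αᵢμ for every i with 2 ≤ i ≤ m−1; μα_m = α_mν; and ν·(α₁α₂⋯α_{m−2}) = (α₁α₂⋯α_{m−2})·α_{m−1}. Then for every natural number k, α₂ α₃ ⋯ α_m · α₁ · α₂ᵏ · α₃ ⋯ α_{m−1} α_m · α₁ α₂ ⋯ α_{m−2} = α₃ α₄ ⋯ α_m · α₁ · α₂ᵏ · α₃ ⋯ α_{m−1}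 α_m · α₁ α₂ ⋯ α_{m−1}. -/
/-- The ordered product `α a * α (a+1) * ⋯ * α b` in a monoid. -/
def ordProd {G : Type*} [Monoid G] (α : ℕ → G) (a b : ℕ) : G :=
  ((List.range' a (b + 1 - a)).map α).prod

theorem stmt_8 {G : Type*} [Group G] (m : ℕ) (hm : 3 ≤ m) (α : ℕ → G)
    (lam mu nu : G)
    (h1 : α 2 * ordProd α 3 m = ordProd α 3 m * lam)
    (h2 : lam * α 1 = α 1 * mu)
    (h3 : ∀ i : ℕ, 2 ≤ i → i ≤ m - 1 → mu * α i = α i * mu)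
    (h4 : mu * α m = α m * nu)
    (h5 : nu * ordProd α 1 (m - 2) = ordProd α 1 (m - 2) * α (m - 1)) :
    ∀ k : ℕ,
      α 2 * ordProd α 3 m * α 1 * α 2 ^ k * ordProd α 3 m * ordProd α 1 (m - 2) =
        ordProd α 3 m * α 1 * α 2 ^ k * ordProd α 3 m * ordProd α 1 (m - 1) := by
  intro k
  have hm1 : ordProd α 1 (m - 1) = ordProd α 1 (m - 2) * α (m - 1) := by
    unfold ordProd
    have h : m - 1 + 1 - 1 = (m - 2 + 1 - 1) + 1 := by omega
    rw [h, List.range'_concat, List.map_append, List.prod_append]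
    have h' : 1 + (m - 2) = m - 1 := by omega
    simp [h']
  have hPm : ordProd α 3 m = ordProd α 3 (m - 1) * α m := by
    unfold ordProd
    have h : m + 1 - 3 = (m - 1 + 1 - 3) + 1 := by omega
    rw [h, List.range'_concat, List.map_append, List.prod_append]
    have h' : 3 + (m - 1 - 2) = m := by omega
    simp [h']
  have hmuP : Commute mu (ordProd α 3 (m - 1)) := by
    unfold ordProd
    apply Commute.list_prod_right
    intro x hx
    simp only [List.mem_map, List.mem_range'_1] at hx
    obtain ⟨i, hi, rfl⟩ := hx
    exact h3 i (by omega) (by omega)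
  have muP : mu * ordProd α 3 m = ordProd α 3 m * nu := by
    rw [hPm, ← mul_assoc, hmuP.eq, mul_assoc, h4, ← mul_assoc]
  have hmu2 : mu * α 2 ^ k = α 2 ^ k * mu :=
    ((show Commute mu (α 2) from h3 2 le_rfl (by omega)).pow_right k).eq
  have step : mu * (ordProd α 3 m * ordProd α 1 (m - 2)) =
      ordProd α 3 m * ordProd α 1 (m - 1) := by
    rw [← mul_assoc, muP, mul_assoc, h5, hm1]
  calc α 2 * ordProd α 3 m * α 1 * α 2 ^ k * ordProd α 3 m * ordProd α 1 (m - 2)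
      = α 2 * ordProd α 3 m * (α 1 * (α 2 ^ k * (ordProd α 3 m * ordProd α 1 (m - 2)))) := by
        simp [mul_assoc]
    _ = ordProd α 3 m * lam * (α 1 * (α 2 ^ k * (ordProd α 3 m * ordProd α 1 (m - 2)))) := by
        rw [h1]
    _ = ordProd α 3 m * (lam * α 1) * (α 2 ^ k * (ordProd α 3 m * ordProd α 1 (m - 2))) := by
        simp [mul_assoc]
    _ = ordProd α 3 m * (α 1 * mu) * (α 2 ^ k * (ordProd α 3 m * ordProd α 1 (m - 2))) := by
        rw [h2]
    _ = ordProd α 3 m * α 1 * (mu * α 2 ^ k) * (ordProd α 3 m * ordProd α 1 (m - 2)) := by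
        simp [mul_assoc]
    _ = ordProd α 3 m * α 1 * (α 2 ^ k * mu) * (ordProd α 3 m * ordProd α 1 (m - 2)) := by
        rw [hmu2]
    _ = ordProd α 3 m * α 1 * α 2 ^ k * (mu * (ordProd α 3 m * ordProd α 1 (m - 2))) := by
        simp [mul_assoc]
    _ = ordProd α 3 m * α 1 * α 2 ^ k * (ordProd α 3 m * ordProd α 1 (m - 1)) := by
        rw [step]
    _ = ordProd α 3 m * α 1 * α 2 ^ k * ordProd α 3 m * ordProd α 1 (m - 1) := by
        simp [mul_assoc]
end

section
/- Let n ≥ 2 and let B_n be the braid group on n strands with Artin generators σ₁, …, σ_{n−1}. For 1 ≤ s < t ≤ n define the band generator a_{ts} = (σ_{t−1} σ_{t−2} ⋯ σ_{s+1}) σ_s (σ_{s+1}^{-1} ⋯ σ_{t−2}^{-1} σ_{t−1}^{-1}) ∈ B_n. Then for all indices with 1 ≤ s < t ≤ n and 1 ≤ q < r ≤ n satisfying (t−r)(t−q)(s−r)(s−q) > 0, the commutation relation a_{ts} a_{rq} = a_{rq} a_{ts} holds in B_n. -/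
/-- The defining relators of the Artin presentation of the braid group `B_n`:
generators `σ₁, …, σ_{n-1}` are indexed by `Fin (n-1)` (index `i` stands for
`σ_{i+1}`), with braid relators for adjacent indices and commutation relators
for distant indices. -/
def braidRels (n : ℕ) : Set (FreeGroup (Fin (n - 1))) :=
  {r | ∃ i j : Fin (n - 1), (i : ℕ) + 1 = (j : ℕ) ∧
        r = FreeGroup.of i * FreeGroup.of j * FreeGroup.of i *
          (FreeGroup.of j * FreeGroup.of i * FreeGroup.of j)⁻¹} ∪
  {r | ∃ i j : Fin (n - 1), (i : ℕ) + 2 ≤ (j : ℕ) ∧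
        r = FreeGroup.of i * FreeGroup.of j *
          (FreeGroup.of j * FreeGroup.of i)⁻¹}

/-- The braid group on `n` strands, via the Artin presentation. -/
abbrev BraidGroup (n : ℕ) := PresentedGroup (braidRels n)

/-- The Artin generator `σ i` of `B_n`, for `1 ≤ i ≤ n - 1` (and junk value `1`
otherwise). -/
def sigma (n : ℕ) (i : ℕ) : BraidGroup n :=
  if h : 1 ≤ i ∧ i ≤ n - 1 then PresentedGroup.of (⟨i - 1, by omega⟩ : Fin (n - 1))
  else 1

/-- The band generator
`a_{ts} = (σ_{t-1} σ_{t-2} ⋯ σ_{s+1}) σ_s (σ_{s+1}⁻¹ ⋯ σ_{t-2}⁻¹ σ_{t-1}⁻¹)`. -/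
def band (n : ℕ) (t s : ℕ) : BraidGroup n :=
  (((List.range' (s + 1) (t - 1 - s)).map (sigma n)).reverse).prod * sigma n s *
    ((((List.range' (s + 1) (t - 1 - s)).map (sigma n)).reverse).prod)⁻¹

namespace BraidAux

variable {n : ℕ}

lemma rel_eq_one {r : FreeGroup (Fin (n - 1))} (h : r ∈ braidRels n) :
    PresentedGroup.mk (braidRels n) r = 1 :=
  (QuotientGroup.eq_one_iff _).mpr (Subgroup.subset_normalClosure h)

lemma of_comm (i j : Fin (n - 1)) (h : (i : ℕ) + 2 ≤ (j : ℕ)) :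
    Commute (PresentedGroup.of (rels := braidRels n) i) (PresentedGroup.of j) := by
  have h1 := rel_eq_one (n := n) (Or.inr ⟨i, j, h, rfl⟩)
  rw [map_mul, map_inv, map_mul, map_mul, mul_inv_eq_one] at h1
  exact h1

lemma of_braid (i j : Fin (n - 1)) (h : (i : ℕ) + 1 = (j : ℕ)) :
    PresentedGroup.of (rels := braidRels n) i * PresentedGroup.of j * PresentedGroup.of i =
      PresentedGroup.of j * PresentedGroup.of i * PresentedGroup.of j := by
  have h1 := rel_eq_one (n := n) (Or.inl ⟨i, j, h, rfl⟩)
  rw [map_mul, map_inv, map_mul, map_mul, map_mul, map_mul, mul_inv_eq_one] at h1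
  exact h1

lemma sigma_comm (i j : ℕ) (h : i + 2 ≤ j) : Commute (sigma n i) (sigma n j) := by
  unfold sigma
  split_ifs with h1 h2 h2
  · exact of_comm _ _ (by simp; omega)
  · exact Commute.one_right _
  · exact Commute.one_left _
  · exact Commute.one_left _

lemma sigma_braid (i : ℕ) (h1 : 1 ≤ i) (h2 : i + 1 ≤ n - 1) :
    sigma n i * sigma n (i + 1) * sigma n i = sigma n (i + 1) * sigma n i * sigma n (i + 1) := by
  unfold sigma
  rw [dif_pos ⟨h1, by omega⟩, dif_pos (⟨by omega, h2⟩ : 1 ≤ i + 1 ∧ i + 1 ≤ n - 1)]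
  exact of_braid _ _ (by simp; omega)

/-- `P n q m = σ_{q+m} σ_{q+m-1} ⋯ σ_{q+1}`. -/
def P (n q m : ℕ) : BraidGroup n := (((List.range' (q + 1) m).map (sigma n)).reverse).prod

lemma band_eq (r q : ℕ) : band n r q = P n q (r - 1 - q) * sigma n q * (P n q (r - 1 - q))⁻¹ := rfl

lemma P_succ (q m : ℕ) : P n q (m + 1) = sigma n (q + 1 + m) * P n q m := by
  unfold P
  rw [List.range'_concat]
  simp

lemma commute_P {q m : ℕ} {X : BraidGroup n}
    (h : ∀ k, q + 1 ≤ k → k ≤ q + m → Commute (sigma n k) X) :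
    Commute (P n q m) X := by
  refine ((Commute.list_prod_right _ _ ?_)).symm
  intro x hx
  simp only [List.mem_reverse, List.mem_map, List.mem_range'_1] at hx
  obtain ⟨k, hk, rfl⟩ := hx
  exact (h k (by omega) (by omega)).symm

lemma shift (q : ℕ) (hq : 1 ≤ q) : ∀ m k : ℕ, q + 1 ≤ k → k + 1 ≤ q + m → q + m ≤ n - 1 →
    sigma n k * P n q m = P n q m * sigma n (k + 1) := by
  intro m
  induction m with
  | zero => intro k h1 h2 _; omega
  | succ m ih =>
    intro k h1 h2 hv
    rw [P_succ]
    rcases Nat.lt_or_ge k (q + m) with hk | hk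
    · -- k + 1 ≤ q + m : commute past the top generator, then induct
      have hc : Commute (sigma n k) (sigma n (q + 1 + m)) := sigma_comm _ _ (by omega)
      calc sigma n k * (sigma n (q + 1 + m) * P n q m)
          = sigma n (q + 1 + m) * (sigma n k * P n q m) := by
            rw [← mul_assoc, hc.eq, mul_assoc]
        _ = sigma n (q + 1 + m) * (P n q m * sigma n (k + 1)) := by
            rw [ih k h1 (by omega) (by omega)]
        _ = sigma n (q + 1 + m) * P n q m * sigma n (k + 1) := by rw [mul_assoc]
    · -- k = q + m, use the braid relation
      have hkm : k = q + m := by omega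
      subst hkm
      obtain ⟨m', rfl⟩ : ∃ m', m = m' + 1 := ⟨m - 1, by omega⟩
      rw [P_succ]
      have htop : q + 1 + m' = q + (m' + 1) := by omega
      rw [htop]
      have hfar : Commute (sigma n (q + (m' + 1) + 1)) (P n q m') := by
        refine (commute_P (q := q) (m := m') ?_).symm
        intro k hk1 hk2
        exact sigma_comm k (q + (m' + 1) + 1) (by omega)
      have hb := sigma_braid (n := n) (q + (m' + 1)) (by omega) (by omega)
      have h111 : q + 1 + (m' + 1) = q + (m' + 1) + 1 := by omega
      rw [h111]
      calc sigma n (q + (m' + 1)) * (sigma n (q + (m' + 1) + 1) *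
            (sigma n (q + (m' + 1)) * P n q m'))
          = (sigma n (q + (m' + 1)) * sigma n (q + (m' + 1) + 1) * sigma n (q + (m' + 1))) *
              P n q m' := by group
        _ = (sigma n (q + (m' + 1) + 1) * sigma n (q + (m' + 1)) * sigma n (q + (m' + 1) + 1)) *
              P n q m' := by rw [hb]
        _ = sigma n (q + (m' + 1) + 1) * sigma n (q + (m' + 1)) *
              (sigma n (q + (m' + 1) + 1) * P n q m') := by group
        _ = sigma n (q + (m' + 1) + 1) * sigma n (q + (m' + 1)) *
              (P n q m' * sigma n (q + (m' + 1) + 1)) := by rw [hfar.eq]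
        _ = sigma n (q + (m' + 1) + 1) * (sigma n (q + (m' + 1)) * P n q m') *
              sigma n (q + (m' + 1) + 1) := by group

lemma inner (r q k : ℕ) (hq : 1 ≤ q) (hrn : r ≤ n) (h1 : q < k) (h2 : k < r - 1) :
    Commute (sigma n k) (band n r q) := by
  have hqm : q + (r - 1 - q) = r - 1 := by omega
  have e1 : sigma n k * P n q (r - 1 - q) = P n q (r - 1 - q) * sigma n (k + 1) :=
    shift q hq _ k (by omega) (by omega) (by omega)
  have e2 : sigma n (k + 1) * (P n q (r - 1 - q))⁻¹ = (P n q (r - 1 - q))⁻¹ * sigma n k := by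
    calc sigma n (k + 1) * (P n q (r - 1 - q))⁻¹
        = (P n q (r - 1 - q))⁻¹ * (P n q (r - 1 - q) * sigma n (k + 1)) *
            (P n q (r - 1 - q))⁻¹ := by group
      _ = (P n q (r - 1 - q))⁻¹ * (sigma n k * P n q (r - 1 - q)) *
            (P n q (r - 1 - q))⁻¹ := by rw [e1]
      _ = (P n q (r - 1 - q))⁻¹ * sigma n k := by group
  have hc : Commute (sigma n (k + 1)) (sigma n q) := (sigma_comm q (k + 1) (by omega)).symm
  show sigma n k * band n r q = band n r q * sigma n k
  rw [band_eq]
  calc sigma n k * (P n q (r - 1 - q) * sigma n q * (P n q (r - 1 - q))⁻¹)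
      = (sigma n k * P n q (r - 1 - q)) * sigma n q * (P n q (r - 1 - q))⁻¹ := by group
    _ = P n q (r - 1 - q) * (sigma n (k + 1) * sigma n q) * (P n q (r - 1 - q))⁻¹ := by
        rw [e1]; group
    _ = P n q (r - 1 - q) * (sigma n q * sigma n (k + 1)) * (P n q (r - 1 - q))⁻¹ := by
        rw [hc.eq]
    _ = P n q (r - 1 - q) * sigma n q * (sigma n (k + 1) * (P n q (r - 1 - q))⁻¹) := by group
    _ = P n q (r - 1 - q) * sigma n q * ((P n q (r - 1 - q))⁻¹ * sigma n k) := by rw [e2]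
    _ = P n q (r - 1 - q) * sigma n q * (P n q (r - 1 - q))⁻¹ * sigma n k := by group

lemma commute_band (r q : ℕ) (X : BraidGroup n) (hqr : q < r)
    (h : ∀ k, q ≤ k → k + 1 ≤ r → Commute (sigma n k) X) :
    Commute (band n r q) X := by
  have hP : Commute (P n q (r - 1 - q)) X :=
    commute_P (fun k hk1 hk2 => h k (by omega) (by omega))
  rw [band_eq]
  exact (hP.mul_left (h q le_rfl (by omega))).mul_left hP.inv_left

lemma far_left (r q k : ℕ) (hqr : q < r) (hk : k + 2 ≤ q) :
    Commute (sigma n k) (band n r q) :=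
  (commute_band r q _ hqr (fun j hj1 _ => (sigma_comm k j (by omega)).symm)).symm

lemma far_right (r q k : ℕ) (hqr : q < r) (hk : r + 1 ≤ k) :
    Commute (sigma n k) (band n r q) :=
  (commute_band r q _ hqr (fun j hj1 hj2 => sigma_comm j k (by omega))).symm

end BraidAux

open BraidAux in
theorem stmt_10 (n : ℕ) (hn : 2 ≤ n) (t s r q : ℕ)
    (hs : 1 ≤ s) (hst : s < t) (htn : t ≤ n)
    (hq : 1 ≤ q) (hqr : q < r) (hrn : r ≤ n)
    (hcond : 0 < ((t : ℤ) - r) * ((t : ℤ) - q) * ((s : ℤ) - r) * ((s : ℤ) - q)) :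
    band n t s * band n r q = band n r q * band n t s := by
  have htr : t ≠ r := by rintro rfl; simp [sub_self] at hcond
  have htq : t ≠ q := by rintro rfl; simp [sub_self] at hcond
  have hsr : s ≠ r := by rintro rfl; simp [sub_self] at hcond
  have hsq : s ≠ q := by rintro rfl; simp [sub_self] at hcond
  -- the four geometric configurations
  have key : Commute (band n t s) (band n r q) := by
    rcases Nat.lt_or_ge s q with h1 | h1
    · -- s < q
      rcases Nat.lt_or_ge r t with h2 | h2
      · -- nested : s < q < r < t
        exact (commute_band r q (band n t s) hqr
          (fun k hk1 hk2 => inner t s k hs htn (by omega) (by omega))).symm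
      · have h2' : t < r := by omega
        rcases Nat.lt_or_ge t q with h3 | h3
        · -- disjoint : s < t < q < r
          exact commute_band t s (band n r q) hst
            (fun k hk1 hk2 => far_left r q k hqr (by omega))
        · -- linked : s < q < t < r, contradiction
          exfalso
          have h3' : q < t := by omega
          have hA : (t : ℤ) - r < 0 := by
            have : (t : ℤ) < r := by exact_mod_cast h2'
            linarith
          have hB : (0 : ℤ) < (t : ℤ) - q := by
            have : (q : ℤ) < t := by exact_mod_cast h3'
            linarith
          have hC : (s : ℤ) - r < 0 := by
            have : (s : ℤ) < r := by exact_mod_cast (by omega : s < r)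
            linarith
          have hD : (s : ℤ) - q < 0 := by
            have : (s : ℤ) < q := by exact_mod_cast h1
            linarith
          have p1 : ((t : ℤ) - r) * ((t : ℤ) - q) < 0 := mul_neg_of_neg_of_pos hA hB
          have p2 : (0 : ℤ) < ((t : ℤ) - r) * ((t : ℤ) - q) * ((s : ℤ) - r) :=
            mul_pos_of_neg_of_neg p1 hC
          have p3 : ((t : ℤ) - r) * ((t : ℤ) - q) * ((s : ℤ) - r) * ((s : ℤ) - q) < 0 :=
            mul_neg_of_pos_of_neg p2 hD
          linarith
    · have h1' : q < s := by omega
      rcases Nat.lt_or_ge t r with h2 | h2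
      · -- nested : q < s < t < r
        exact commute_band t s (band n r q) hst
          (fun k hk1 hk2 => inner r q k hq hrn (by omega) (by omega))
      · have h2' : r < t := by omega
        rcases Nat.lt_or_ge r s with h3 | h3
        · -- disjoint : q < r < s < t
          exact (commute_band r q (band n t s) hqr
            (fun k hk1 hk2 => far_left t s k hst (by omega))).symm
        · -- linked : q < s < r < t, contradiction
          exfalso
          have h3' : s < r := by omega
          have hA : (0 : ℤ) < (t : ℤ) - r := by
            have : (r : ℤ) < t := by exact_mod_cast h2'
            linarith
          have hB : (0 : ℤ) < (t : ℤ) - q := by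
            have : (q : ℤ) < t := by exact_mod_cast (by omega : q < t)
            linarith
          have hC : (s : ℤ) - r < 0 := by
            have : (s : ℤ) < r := by exact_mod_cast h3'
            linarith
          have hD : (0 : ℤ) < (s : ℤ) - q := by
            have : (q : ℤ) < s := by exact_mod_cast h1'
            linarith
          have p1 : (0 : ℤ) < ((t : ℤ) - r) * ((t : ℤ) - q) := mul_pos hA hB
          have p2 : ((t : ℤ) - r) * ((t : ℤ) - q) * ((s : ℤ) - r) < 0 :=
            mul_neg_of_pos_of_neg p1 hC
          have p3 : ((t : ℤ) - r) * ((t : ℤ) - q) * ((s : ℤ) - r) * ((s : ℤ) - q) < 0 :=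
            mul_neg_of_neg_of_pos p2 hD
          linarith
  exact key.eq
end
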